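/- Let H(x₁,x₂,x₃) = −x₃ + x₃²x₁ + x₃²x₁x₂ − 2 + 2x₃x₁ + 2x₃x₁x₂ + x₁ + x₁x₂ and let β₁, β₂ be positive integers. There are no critical points of H for the direction α = (β₁+β₂, β₂, β₁+β₂): no point x ∈ ℂ³ satisfies both H(x) = 0 and α_j·x_i·∂_iH(x) = α_i·x_j·∂_jH(x) for all 1 ≤ i,j ≤ 3. -/

import Mathlib

/-!
Writing `u = x₁(1 + x₂)` and `z = x₃`, the polynomial factors as `H = u(z+1)² - z - 2`.
Since `α₁ = α₃ ≠ 0`, a critical point satisfies `x₁ ∂₁H = x₃ ∂₃H`, i.e.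
`u(z+1)² = z(2u(z+1) - 1)`, equivalently `u(z+1)(z-1) = z`. Multiplying this by `z + 1`
and `H = 0` by `z - 1` gives two values of `u(z+1)²(z-1)` that differ by `2`.
-/

open MvPolynomial

def IsCriticalPoint {σ K : Type*} [CommSemiring K] (H : MvPolynomial σ K) (α : σ → ℕ)
    (x : σ → K) : Prop :=
  eval x H = 0 ∧ ∀ i j : σ,
    (α j : K) * x i * eval x (pderiv i H) = (α i : K) * x j * eval x (pderiv j H)

theorem IsCriticalPoint.mul_eval_pderiv_eq {σ K : Type*} [CommRing K] [IsDomain K] [CharZero K]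
    {H : MvPolynomial σ K} {α : σ → ℕ} {x : σ → K} (hx : IsCriticalPoint H α x) {i j : σ}
    (hij : α i = α j) (hi : α i ≠ 0) :
    x i * eval x (pderiv i H) = x j * eval x (pderiv j H) := by
  have hαi : (α i : K) ≠ 0 := Nat.cast_ne_zero.mpr hi
  have h := hx.2 i j
  rw [← hij, mul_assoc, mul_assoc] at h
  exact mul_left_cancel₀ hαi h

@[simp]
theorem MvPolynomial.pderiv_ofNat {σ R : Type*} [CommSemiring R] (i : σ) (n : ℕ)
    [n.AtLeastTwo] : pderiv i (ofNat(n) : MvPolynomial σ R) = 0 :=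
  (pderiv i).map_natCast n

section bivariateH

variable (R : Type*) [CommRing R]

noncomputable def bivariateH : MvPolynomial (Fin 3) R :=
  X 0 * (1 + X 1) * (X 2 + 1) ^ 2 - X 2 - 2

theorem pderiv_zero_bivariateH : pderiv 0 (bivariateH R) = (1 + X 1) * (X 2 + 1) ^ 2 := by
  simp [bivariateH, pderiv_X]
  ring

theorem pderiv_two_bivariateH :
    pderiv 2 (bivariateH R) = 2 * X 0 * (1 + X 1) * (X 2 + 1) - 1 := by
  simp [bivariateH, pderiv_X]
  ring

end bivariateH

theorem another_basic_bivariate_no_critical_points_general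
    (H : MvPolynomial (Fin 3) ℂ)
    (hH : H = -X 2 + (X 2) ^ 2 * X 0 + (X 2) ^ 2 * X 0 * X 1 - 2 + 2 * X 2 * X 0
      + 2 * X 2 * X 0 * X 1 + X 0 + X 0 * X 1)
    (b1 b2 : ℕ) (hb1 : 0 < b1)
    (α : Fin 3 → ℕ) (hα : α = ![b1 + b2, b2, b1 + b2]) :
    ¬ ∃ x : Fin 3 → ℂ,
      eval x H = 0 ∧ ∀ i j : Fin 3,
        (α j : ℂ) * x i * eval x (pderiv i H) = (α i : ℂ) * x j * eval x (pderiv j H) := by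
  rintro ⟨x, hx⟩
  rw [show H = bivariateH ℂ from hH.trans (by simp only [bivariateH]; ring)] at hx
  replace hx : IsCriticalPoint (bivariateH ℂ) α x := hx
  have key := hx.mul_eval_pderiv_eq (i := 0) (j := 2) (by simp [hα]) (by simp [hα, hb1.ne'])
  have h0 := hx.1
  rw [pderiv_zero_bivariateH, pderiv_two_bivariateH] at key
  simp only [bivariateH, map_mul, map_add, map_sub, map_pow, map_one, eval_X, eval_ofNat]
    at key h0
  exact two_ne_zero (α := ℂ) (by linear_combination (x 2 + 1) * key + (x 2 - 1) * h0)

/-- `H(x₁,x₂,x₃) = -x₃ + x₃²x₁ + x₃²x₁x₂ - 2 + 2x₃x₁ + 2x₃x₁x₂ + x₁ + x₁x₂` has no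
critical points for the direction `α = (β₁+β₂, β₂, β₁+β₂)`. -/
theorem another_basic_bivariate_no_critical_points
    (H : MvPolynomial (Fin 3) ℂ)
    (hH : H = -X 2 + (X 2) ^ 2 * X 0 + (X 2) ^ 2 * X 0 * X 1 - 2 + 2 * X 2 * X 0
      + 2 * X 2 * X 0 * X 1 + X 0 + X 0 * X 1)
    (b1 b2 : ℕ) (hb1 : 0 < b1) (hb2 : 0 < b2)
    (α : Fin 3 → ℕ) (hα : α = ![b1 + b2, b2, b1 + b2]) :
    ¬ ∃ x : Fin 3 → ℂ,
      eval x H = 0 ∧ ∀ i j : Fin 3,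
        (α j : ℂ) * x i * eval x (pderiv i H) = (α i : ℂ) * x j * eval x (pderiv j H) :=
  another_basic_bivariate_no_critical_points_general H hH b1 b2 hb1 α hα
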